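/- arXiv:math/0307057 — 7 statements merged into one kernel-verified Lean document; each statement's English description precedes it below -/
import Mathlib

section
/- For every natural number m, the sum over k from 0 to m of (-1)^k * (k+1) / ((k+3)! * (m-k)!) equals (m+1)/(m+3)!. -/
open Finset

lemma alt_j_choose (n : ℕ) (hn : n ≠ 0) :
    ∑ j ∈ Finset.range (n + 2), (-1 : ℤ) ^ j * j * ((n + 1).choose j) = 0 := by
  rw [Finset.sum_range_succ']
  have h : ∀ i : ℕ, (-1 : ℤ) ^ (i + 1) * ((i + 1 : ℕ) : ℤ) * (((n + 1).choose (i + 1) : ℕ) : ℤ) =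
      -((n + 1) * ((-1) ^ i * (n.choose i))) := by
    intro i
    have h2 : ((n + 1 : ℕ) * n.choose i : ℤ) = ((n + 1).choose (i + 1) * (i + 1) : ℤ) := by
      exact_mod_cast congrArg (Nat.cast : ℕ → ℤ) (Nat.add_one_mul_choose_eq n i)
    push_cast at h2 ⊢
    linear_combination ((-1 : ℤ) ^ i) * h2
  simp only [h]
  rw [Finset.sum_neg_distrib, ← Finset.mul_sum, Int.alternating_sum_range_choose]
  simp [hn]

lemma keyA (m : ℕ) :
    ∑ k ∈ Finset.range (m + 1), (-1 : ℤ) ^ k * (k + 1) * ((m + 3).choose (k + 3)) = m + 1 := by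
  have e1 := Int.alternating_sum_range_choose (n := m + 3)
  have e2 := alt_j_choose (m + 2) (by omega)
  have h0 : ∑ j ∈ Finset.range (m + 4), (-1 : ℤ) ^ j * ((j : ℤ) - 2) * ((m + 3).choose j) = 0 := by
    have hptw : ∀ j : ℕ, (-1 : ℤ) ^ j * ((j : ℤ) - 2) * ((m + 3).choose j) =
        (-1) ^ j * (j : ℤ) * ((m + 3).choose j) - 2 * ((-1) ^ j * ((m + 3).choose j)) := by
      intro j; ring
    simp only [hptw]
    rw [Finset.sum_sub_distrib, ← Finset.mul_sum]
    rw [show m + 4 = (m + 2) + 2 from rfl] at *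
    rw [show m + 3 = (m + 2) + 1 from rfl] at e1 ⊢
    rw [e2]
    rw [show (m + 2) + 2 = ((m + 2) + 1) + 1 from rfl, e1]
    simp
  rw [show m + 4 = (m + 3) + 1 from rfl, Finset.sum_range_succ'] at h0
  rw [show m + 3 = (m + 2) + 1 from rfl, Finset.sum_range_succ'] at h0
  rw [show m + 2 = (m + 1) + 1 from rfl, Finset.sum_range_succ'] at h0
  have heq : ∀ k : ℕ, (-1 : ℤ) ^ (k + 1 + 1 + 1) * (((k + 1 + 1 + 1 : ℕ) : ℤ) - 2) *
      (((m + 2 + 1).choose (k + 1 + 1 + 1) : ℕ) : ℤ) =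
      -((-1 : ℤ) ^ k * ((k : ℤ) + 1) * ((m + 3).choose (k + 3))) := by
    intro k
    rw [show k + 1 + 1 + 1 = k + 3 from by omega, show m + 2 + 1 = m + 3 from rfl]
    push_cast
    ring
  simp only [heq] at h0
  rw [Finset.sum_neg_distrib] at h0
  norm_num [Nat.choose_one_right] at h0
  linarith [h0]

theorem stmt0 (m : ℕ) :
    ∑ k ∈ Finset.range (m + 1),
      (-1 : ℚ) ^ k * (k + 1) / ((Nat.factorial (k + 3) : ℚ) * (Nat.factorial (m - k) : ℚ)) =
      (m + 1) / (Nat.factorial (m + 3) : ℚ) := by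
  have key := keyA m
  have hterm : ∀ k ∈ Finset.range (m + 1),
      (-1 : ℚ) ^ k * (k + 1) / ((Nat.factorial (k + 3) : ℚ) * (Nat.factorial (m - k) : ℚ)) =
      ((-1 : ℚ) ^ k * (k + 1) * ((m + 3).choose (k + 3))) / (Nat.factorial (m + 3) : ℚ) := by
    intro k hk
    rw [Finset.mem_range] at hk
    have hle : k + 3 ≤ m + 3 := by omega
    have hc := Nat.cast_choose ℚ hle
    have hsub : m + 3 - (k + 3) = m - k := by omega
    rw [hsub] at hc
    have h1 : (Nat.factorial (k + 3) : ℚ) ≠ 0 := by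
      exact_mod_cast Nat.factorial_ne_zero (k + 3)
    have h2 : (Nat.factorial (m - k) : ℚ) ≠ 0 := by
      exact_mod_cast Nat.factorial_ne_zero (m - k)
    have h3 : (Nat.factorial (m + 3) : ℚ) ≠ 0 := by
      exact_mod_cast Nat.factorial_ne_zero (m + 3)
    rw [hc]
    field_simp
  rw [Finset.sum_congr rfl hterm, ← Finset.sum_div]
  congr 1
  have := congrArg (Int.cast : ℤ → ℚ) key
  push_cast at this ⊢
  convert this using 2
end

section
/- For all natural numbers n ≥ 2 and m with 1 ≤ m ≤ n-1, the sum over p from 0 to m of (-1)^p * (n-p-1)/(n-p+1) * C(m,p) equals 2*(-1)^(m-1) / ((n+1) * C(n,m)), where C denotes the binomial coefficient. -/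
/-!
Since `(n - p - 1) / (n - p + 1) = 1 - 2 / (n + 1 - p)` and `∑ (-1)^p C(m,p) = 0` for `m ≥ 1`,
the sum is `-2 ∑ (-1)^p C(m,p) / (n + 1 - p)`. This is the partial-fraction identity
`∑ (-1)^k C(m,k) / (y - k) = (-1)^m m! / (y (y - 1) ⋯ (y - m))`, proved by induction on `m` with
Pascal's rule, evaluated at `y = n + 1`, where the falling factorial is `(n + 1) m! C(n,m)`.
-/

open Finset Polynomial
open scoped Nat

theorem descPochhammer_succ_eval_left {R : Type*} [CommRing R] (n : ℕ) (y : R) :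
    (descPochhammer R (n + 1)).eval y = y * (descPochhammer R n).eval (y - 1) := by
  rw [descPochhammer_succ_left, eval_mul, eval_X, eval_comp, eval_sub, eval_X, eval_one]

theorem sum_range_neg_one_pow_mul_choose_div_sub {K : Type*} [Field K] (m : ℕ) (y : K)
    (hy : (descPochhammer K (m + 1)).eval y ≠ 0) :
    ∑ k ∈ range (m + 1), (-1) ^ k * (m.choose k : K) / (y - k) =
      (-1) ^ m * m ! / (descPochhammer K (m + 1)).eval y := by
  induction m generalizing y with
  | zero => simp [descPochhammer_one]
  | succ m ih =>
    have pascal := sum_choose_succ_mul (fun k _ ↦ (-1) ^ k / (y - k)) m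
    have hright := descPochhammer_succ_eval (m + 1) y
    have hleft := descPochhammer_succ_eval_left (m + 1) y
    obtain ⟨hA, hym⟩ := mul_ne_zero_iff.mp (hright ▸ hy)
    obtain ⟨hy0, hB⟩ := mul_ne_zero_iff.mp (hleft ▸ hy)
    calc ∑ k ∈ range (m + 2), (-1) ^ k * ((m + 1).choose k : K) / (y - k)
        = ∑ k ∈ range (m + 1), (-1) ^ k * (m.choose k : K) / (y - k)
          - ∑ k ∈ range (m + 1), (-1) ^ k * (m.choose k : K) / (y - 1 - k) := by
          simp only [mul_div_assoc, mul_comm ((-1 : K) ^ _)] at pascal ⊢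
          rw [pascal, sub_eq_add_neg, ← sum_neg_distrib]
          congr 1
          refine sum_congr rfl fun k _ ↦ ?_
          push_cast
          ring_nf
      _ = _ := by
          rw [ih y hA, ih (y - 1) hB]
          have hB_eq : (descPochhammer K (m + 1)).eval (y - 1) =
              (descPochhammer K (m + 1)).eval y * (y - ↑(m + 1)) / y := by
            rw [eq_div_iff hy0, ← hright, hleft, mul_comm]
          rw [hright, hB_eq, Nat.factorial_succ]
          field_simp
          push_cast
          ring

theorem descPochhammer_eval_natCast_add_one {R : Type*} [CommRing R] (n m : ℕ) :
    (descPochhammer R (m + 1)).eval ((n : R) + 1) = ((n : R) + 1) * m ! * n.choose m := by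
  rw [← Nat.cast_add_one, descPochhammer_eval_eq_descFactorial, Nat.succ_descFactorial_succ,
    Nat.descFactorial_eq_factorial_mul_choose]
  push_cast
  ring

theorem sum_range_neg_one_pow_mul_choose_div_natCast {K : Type*} [Field K] [CharZero K]
    {n m : ℕ} (hmn : m ≤ n) :
    ∑ p ∈ range (m + 1), (-1) ^ p * (m.choose p : K) / ((n : K) + 1 - p) =
      (-1) ^ m / (((n : K) + 1) * n.choose m) := by
  have hchoose : (n.choose m : K) ≠ 0 := by exact_mod_cast (Nat.choose_pos hmn).ne'
  have hfact : (m ! : K) ≠ 0 := by exact_mod_cast m.factorial_ne_zero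
  have hn : (n : K) + 1 ≠ 0 := by exact_mod_cast n.succ_ne_zero
  have hP := descPochhammer_eval_natCast_add_one (R := K) n m
  rw [sum_range_neg_one_pow_mul_choose_div_sub m _ (by rw [hP]; positivity), hP]
  field_simp

theorem stmt1_general (n m : ℕ) (hm1 : 1 ≤ m) (hm : m ≤ n - 1) :
    ∑ p ∈ Finset.range (m + 1),
      (-1 : ℚ) ^ p * ((n : ℚ) - p - 1) / ((n : ℚ) - p + 1) * (Nat.choose m p : ℚ) =
      2 * (-1 : ℚ) ^ (m - 1) / (((n : ℚ) + 1) * (Nat.choose n m : ℚ)) := by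
  have hmn : m ≤ n := by omega
  have halt : ∑ p ∈ range (m + 1), (-1 : ℚ) ^ p * (m.choose p : ℚ) = 0 := by
    exact_mod_cast Int.alternating_sum_range_choose_of_ne (by omega : m ≠ 0)
  have hsplit : ∀ p ∈ range (m + 1),
      (-1 : ℚ) ^ p * ((n : ℚ) - p - 1) / ((n : ℚ) - p + 1) * (m.choose p : ℚ) =
        (-1) ^ p * (m.choose p : ℚ) - 2 * ((-1) ^ p * (m.choose p : ℚ) / ((n : ℚ) + 1 - p)) := by
    intro p hp
    have hp : (p : ℚ) < n + 1 := by
      exact_mod_cast Nat.lt_succ_of_le ((mem_range_succ_iff.mp hp).trans hmn)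
    field_simp [(by linarith : (n : ℚ) - p + 1 ≠ 0), (by linarith : (n : ℚ) + 1 - p ≠ 0)]
    ring
  rw [sum_congr rfl hsplit, sum_sub_distrib, ← mul_sum, halt,
    sum_range_neg_one_pow_mul_choose_div_natCast hmn]
  obtain ⟨k, rfl⟩ := Nat.exists_eq_add_of_le' hm1
  rw [Nat.add_sub_cancel, pow_succ]
  ring

theorem stmt1 (n m : ℕ) (hn : 2 ≤ n) (hm1 : 1 ≤ m) (hm : m ≤ n - 1) :
    ∑ p ∈ Finset.range (m + 1),
      (-1 : ℚ) ^ p * ((n : ℚ) - p - 1) / ((n : ℚ) - p + 1) * (Nat.choose m p : ℚ) =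
      2 * (-1 : ℚ) ^ (m - 1) / (((n : ℚ) + 1) * (Nat.choose n m : ℚ)) :=
  stmt1_general n m hm1 hm
end

section
/- For every natural number m ≥ 1 and all elements u1, u2 of a commutative ring, the sum over k from 0 to m of (k+1)/(k+3) * C(m+2, k+2) * u1^(m-k) * (u2-u1)^(k+3) equals (m+1)/(m+3) * (u2^(m+3) - u1^(m+3)) - u1*u2*(u2^(m+1) - u1^(m+1)). -/
theorem sumA {R : Type*} [CommRing R] [Algebra ℚ R] (m : ℕ) (u v : R) :
    ∑ k ∈ Finset.range (m + 1), ((Nat.choose (m + 2) (k + 2) : ℚ)) • (u ^ (m - k) * v ^ (k + 2)) =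
      (u + v) ^ (m + 2) - u ^ (m + 2) - ((m : ℚ) + 2) • (u ^ (m + 1) * v) := by
  have h := add_pow v u (m + 2)
  rw [Finset.sum_range_succ', Finset.sum_range_succ'] at h
  have hterm : ∀ i ∈ Finset.range (m + 1),
      v ^ (i + 1 + 1) * u ^ (m + 2 - (i + 1 + 1)) * ((m + 2).choose (i + 1 + 1) : R)
        = ((m + 2).choose (i + 2) : R) * (u ^ (m - i) * v ^ (i + 2)) := by
    intro i hi
    have : m + 2 - (i + 1 + 1) = m - i := by omega
    rw [this]; ring
  rw [Finset.sum_congr rfl hterm] at h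
  have e2 : m + 2 - (0 + 1) = m + 1 := by omega
  have e3 : m + 2 - 0 = m + 2 := by omega
  have e5 : (0:ℕ) + 1 = 1 := by omega
  rw [e2, e3, e5] at h
  simp only [Algebra.smul_def, map_natCast, map_add, map_ofNat, Nat.choose_one_right,
    Nat.choose_zero_right, Nat.cast_one, Nat.cast_add, Nat.cast_ofNat] at h ⊢
  linear_combination -h

theorem sumB {R : Type*} [CommRing R] [Algebra ℚ R] (m : ℕ) (u v : R) :
    ∑ k ∈ Finset.range (m + 1), ((Nat.choose (m + 3) (k + 3) : ℚ)) • (u ^ (m - k) * v ^ (k + 3)) =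
      (u + v) ^ (m + 3) - u ^ (m + 3) - ((m : ℚ) + 3) • (u ^ (m + 2) * v)
        - ((Nat.choose (m + 3) 2 : ℚ)) • (u ^ (m + 1) * v ^ 2) := by
  have h := add_pow v u (m + 3)
  rw [Finset.sum_range_succ', Finset.sum_range_succ', Finset.sum_range_succ'] at h
  have hterm : ∀ i ∈ Finset.range (m + 1),
      v ^ (i + 1 + 1 + 1) * u ^ (m + 3 - (i + 1 + 1 + 1)) * ((m + 3).choose (i + 1 + 1 + 1) : R)
        = ((m + 3).choose (i + 3) : R) * (u ^ (m - i) * v ^ (i + 3)) := by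
    intro i hi
    have : m + 3 - (i + 1 + 1 + 1) = m - i := by omega
    rw [this]; ring
  rw [Finset.sum_congr rfl hterm] at h
  have e1 : m + 3 - (0 + 1 + 1) = m + 1 := by omega
  have e2 : m + 3 - (0 + 1) = m + 2 := by omega
  have e3 : m + 3 - 0 = m + 3 := by omega
  have e4 : (0:ℕ) + 1 + 1 = 2 := by omega
  have e5 : (0:ℕ) + 1 = 1 := by omega
  rw [e1, e2, e3, e4, e5] at h
  simp only [Algebra.smul_def, map_natCast, map_add, map_ofNat, Nat.choose_one_right,
    Nat.choose_zero_right, Nat.cast_one, Nat.cast_add, Nat.cast_ofNat] at h ⊢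
  linear_combination -h

theorem stmt2 {R : Type*} [CommRing R] [Algebra ℚ R] (m : ℕ) (hm : 1 ≤ m) (u1 u2 : R) :
    ∑ k ∈ Finset.range (m + 1),
      (((k : ℚ) + 1) / ((k : ℚ) + 3) * (Nat.choose (m + 2) (k + 2) : ℚ)) •
        (u1 ^ (m - k) * (u2 - u1) ^ (k + 3)) =
      (((m : ℚ) + 1) / ((m : ℚ) + 3)) • (u2 ^ (m + 3) - u1 ^ (m + 3)) -
        u1 * u2 * (u2 ^ (m + 1) - u1 ^ (m + 1)) := by
  obtain ⟨v, rfl⟩ : ∃ v, u2 = u1 + v := ⟨u2 - u1, by ring⟩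
  have hsub : u1 + v - u1 = v := by ring
  rw [hsub]
  have key : ∀ k ∈ Finset.range (m + 1),
      (((k : ℚ) + 1) / ((k : ℚ) + 3) * (Nat.choose (m + 2) (k + 2) : ℚ)) •
          (u1 ^ (m - k) * v ^ (k + 3))
        = (Nat.choose (m + 2) (k + 2) : ℚ) • (u1 ^ (m - k) * v ^ (k + 3))
          - (2 / ((m : ℚ) + 3)) • ((Nat.choose (m + 3) (k + 3) : ℚ) • (u1 ^ (m - k) * v ^ (k + 3))) := by
    intro k hk
    rw [smul_smul, ← sub_smul]
    congr 1
    have hAB : ((m : ℚ) + 3) * (Nat.choose (m + 2) (k + 2) : ℚ)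
        = ((k : ℚ) + 3) * (Nat.choose (m + 3) (k + 3) : ℚ) := by
      have := Nat.add_one_mul_choose_eq (m + 2) (k + 2)
      have := congrArg (Nat.cast (R := ℚ)) this
      push_cast at this
      linarith [this]
    have h1 : ((k : ℚ) + 3) ≠ 0 := by positivity
    have h2 : ((m : ℚ) + 3) ≠ 0 := by positivity
    field_simp
    linear_combination (-2 : ℚ) * hAB
  rw [Finset.sum_congr rfl key, Finset.sum_sub_distrib, ← Finset.smul_sum]
  have hS1 : ∑ k ∈ Finset.range (m + 1),
      (Nat.choose (m + 2) (k + 2) : ℚ) • (u1 ^ (m - k) * v ^ (k + 3))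
      = ((u1 + v) ^ (m + 2) - u1 ^ (m + 2) - ((m : ℚ) + 2) • (u1 ^ (m + 1) * v)) * v := by
    rw [← sumA m u1 v, Finset.sum_mul]
    refine Finset.sum_congr rfl fun k hk => ?_
    rw [smul_mul_assoc, mul_assoc, ← pow_succ]
  rw [hS1, sumB m u1 v]
  -- relations
  have h2 : ((m : ℚ) + 3) ≠ 0 := by positivity
  have hC : (Nat.choose (m + 3) 2 : ℚ) * 2 = ((m : ℚ) + 3) * ((m : ℚ) + 2) := by
    have h0 := Nat.add_one_mul_choose_eq (m + 2) 1
    simp only [Nat.succ_eq_add_one, Nat.choose_one_right] at h0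
    have := congrArg (Nat.cast (R := ℚ)) h0
    push_cast at this
    linarith [this]
  have hmap : ((m : R) + 3) = algebraMap ℚ R ((m : ℚ) + 3) := by simp [map_ofNat]
  have hmap2 : ((m : R) + 2) = algebraMap ℚ R ((m : ℚ) + 2) := by simp [map_ofNat]
  have hc1 : algebraMap ℚ R (2 / ((m : ℚ) + 3)) * ((m : R) + 3) = 2 := by
    rw [hmap, ← map_mul]
    have : 2 / ((m : ℚ) + 3) * ((m : ℚ) + 3) = 2 := by field_simp
    rw [this, map_ofNat]
  have hc2 : algebraMap ℚ R (2 / ((m : ℚ) + 3)) * ((Nat.choose (m + 3) 2 : ℕ) : R) = (m : R) + 2 := by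
    rw [show ((Nat.choose (m + 3) 2 : ℕ) : R) = algebraMap ℚ R ((Nat.choose (m + 3) 2 : ℕ) : ℚ) by simp,
      ← map_mul, hmap2]
    congr 1
    field_simp
    linear_combination hC
  have hd : algebraMap ℚ R (((m : ℚ) + 1) / ((m : ℚ) + 3))
      = 1 - algebraMap ℚ R (2 / ((m : ℚ) + 3)) := by
    rw [← map_one (algebraMap ℚ R), ← map_sub]
    congr 1
    field_simp
    ring
  simp only [Algebra.smul_def, map_natCast, map_add, map_ofNat, Nat.cast_add, Nat.cast_ofNat, hd]
  linear_combination (u1 ^ (m + 2) * v) * hc1 + (u1 ^ (m + 1) * v ^ 2) * hc2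
end

section
/- Let S_{n,k} denote the degree-k elementary symmetric polynomial in the n-1 variables u_1,...,u_{n-1} (with S_{n,0}=1 and S_{n,n}=0), and let T be the linear change of variables sending u_1 to -u_1 and u_j to u_j - u_1 for j ≥ 2. Then for all n ≥ 3 and 0 ≤ k ≤ n, S_{n,k}(T u) = sum over ℓ from 0 to k of (-1)^ℓ * C(n-k+ℓ, n-k) * u_1^ℓ * S_{n,k-ℓ}(u). -/
/-- The degree-`k` elementary symmetric function of `N` variables. -/
def esymmF {R : Type*} [CommRing R] (N k : ℕ) (u : Fin N → R) : R :=
  ∑ s ∈ Finset.powersetCard k (Finset.univ : Finset (Fin N)), ∏ i ∈ s, u i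

open Polynomial Finset in
lemma esymmF_eq_zero {R : Type*} [CommRing R] {N k : ℕ} (h : N < k) (u : Fin N → R) :
    esymmF N k u = 0 := by
  unfold esymmF
  rw [Finset.powersetCard_eq_empty.mpr (by simpa using h), Finset.sum_empty]

open Polynomial Finset in
lemma esymmF_eq_coeff {R : Type*} [CommRing R] {N k : ℕ} (hk : k ≤ N) (u : Fin N → R) :
    esymmF N k u = (∏ i : Fin N, (X + C (u i))).coeff (N - k) := by
  rw [Finset.prod_X_add_C_coeff _ _ (by simp)]
  simp only [Finset.card_univ, Fintype.card_fin]
  rw [Nat.sub_sub_self hk]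
  rfl

open Polynomial Finset in
lemma vietaF {R : Type*} [CommRing R] (N : ℕ) (u : Fin N → R) :
    (∏ i : Fin N, (X + C (u i))) =
      ∑ m ∈ Finset.range (N + 1), C (esymmF N m u) * X ^ (N - m) := by
  have h := Multiset.prod_X_add_C_eq_sum_esymm ((Finset.univ.val.map u) : Multiset R)
  rw [Multiset.map_map] at h
  have hcard : Multiset.card (Finset.univ.val.map u) = N := by simp
  rw [hcard] at h
  have h0 : (∏ i : Fin N, (X + C (u i))) =
      (Multiset.map ((fun r => X + C r) ∘ u) Finset.univ.val).prod := rfl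
  rw [h0, h]
  refine Finset.sum_congr rfl fun m _ => ?_
  rw [Finset.esymm_map_val]
  rfl

theorem stmt3 {R : Type*} [CommRing R] (n k : ℕ) (hn : 3 ≤ n) (hk : k ≤ n)
    (u : Fin (n - 1) → R) :
    esymmF (n - 1) k
        (fun j => if j = (⟨0, by omega⟩ : Fin (n - 1)) then -u ⟨0, by omega⟩
                  else u j - u ⟨0, by omega⟩) =
      ∑ ℓ ∈ Finset.range (k + 1),
        (-1 : R) ^ ℓ * (Nat.choose (n - k + ℓ) (n - k) : R) * (u ⟨0, by omega⟩) ^ ℓ *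
          esymmF (n - 1) (k - ℓ) u := by
  classical
  open Polynomial Finset in
  have hN2 : 2 ≤ n - 1 := by omega
  let i0 : Fin (n - 1) := ⟨0, by omega⟩
  let a : R := u i0
  let v : Fin (n - 1) → R := fun j => if j = i0 then -a else u j - a
  show esymmF (n - 1) k v =
      ∑ ℓ ∈ Finset.range (k + 1),
        (-1 : R) ^ ℓ * (Nat.choose (n - k + ℓ) (n - k) : R) * a ^ ℓ *
          esymmF (n - 1) (k - ℓ) u
  -- the key polynomial identity
  have key : X * ∏ i : Fin (n - 1), (X + C (v i)) =
      ∑ m ∈ Finset.range (n - 1 + 1), C (esymmF (n - 1) m u) * (X - C a) ^ (n - 1 + 1 - m) := by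
    have hcomp : (∏ i : Fin (n - 1), (X + C (u i))).comp (X - C a) =
        X * ∏ i ∈ Finset.univ.erase i0, (X + C (v i)) := by
      rw [Polynomial.prod_comp]
      rw [← Finset.mul_prod_erase Finset.univ _ (Finset.mem_univ i0)]
      simp only [add_comp, X_comp, C_comp]
      have h1 : X - C a + C (u i0) = X := by show X - C a + C a = X; ring
      rw [h1]
      congr 1
      refine Finset.prod_congr rfl fun i hi => ?_
      have h2 : v i = u i - a := by
        show (if i = i0 then -a else u i - a) = u i - a
        rw [if_neg (Finset.mem_erase.mp hi).1]
      rw [h2, map_sub]; ring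
    have hsplit : ∏ i : Fin (n - 1), (X + C (v i)) =
        (X - C a) * ∏ i ∈ Finset.univ.erase i0, (X + C (v i)) := by
      rw [← Finset.mul_prod_erase Finset.univ _ (Finset.mem_univ i0)]
      congr 1
      have h3 : v i0 = -a := by show (if i0 = i0 then -a else _) = -a; rw [if_pos rfl]
      rw [h3, map_neg, sub_eq_add_neg]
    calc X * ∏ i : Fin (n - 1), (X + C (v i))
        = (X - C a) * (X * ∏ i ∈ Finset.univ.erase i0, (X + C (v i))) := by
          rw [hsplit]; ring
      _ = (X - C a) * (∏ i : Fin (n - 1), (X + C (u i))).comp (X - C a) := by rw [hcomp]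
      _ = ∑ m ∈ Finset.range (n - 1 + 1), C (esymmF (n - 1) m u) * (X - C a) ^ (n - 1 + 1 - m) := by
          rw [vietaF, Polynomial.sum_comp, Finset.mul_sum]
          refine Finset.sum_congr rfl fun m hm => ?_
          have hm' : m ≤ n - 1 := by
            have := Finset.mem_range.mp hm; omega
          rw [Polynomial.mul_comp, Polynomial.C_comp, Polynomial.X_pow_comp]
          have h4 : (X - C a) * (C (esymmF (n - 1) m u) * (X - C a) ^ (n - 1 - m)) =
              C (esymmF (n - 1) m u) * ((X - C a) ^ (n - 1 - m) * (X - C a)) := by ring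
          rw [h4, ← pow_succ]
          congr 2
          omega
  -- take the coefficient at degree `n - k`
  have hcoeff := congrArg (fun p => Polynomial.coeff p (n - k)) key
  -- LHS of hcoeff equals esymmF (n-1) k v
  have hL : (X * ∏ i : Fin (n - 1), (X + C (v i))).coeff (n - k) = esymmF (n - 1) k v := by
    rcases eq_or_lt_of_le hk with hkn | hkn
    · subst hkn
      simp only [Nat.sub_self, Polynomial.mul_coeff_zero, Polynomial.coeff_X_zero, zero_mul]
      exact (esymmF_eq_zero (by omega) v).symm
    · have hkN : k ≤ n - 1 := by omega
      have h5 : n - k = ((n - 1) - k) + 1 := by omega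
      rw [h5, Polynomial.coeff_X_mul, ← esymmF_eq_coeff hkN]
  rw [hL] at hcoeff
  -- RHS of hcoeff
  have hR : (∑ m ∈ Finset.range (n - 1 + 1),
        C (esymmF (n - 1) m u) * (X - C a) ^ (n - 1 + 1 - m)).coeff (n - k) =
      ∑ m ∈ Finset.range (n - 1 + 1),
        esymmF (n - 1) m u *
          ((-a) ^ ((n - 1 + 1 - m) - (n - k)) * ((n - 1 + 1 - m).choose (n - k) : R)) := by
    rw [Polynomial.finset_sum_coeff]
    refine Finset.sum_congr rfl fun m _ => ?_
    rw [Polynomial.coeff_C_mul, sub_eq_add_neg, ← Polynomial.C_neg,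
      Polynomial.coeff_X_add_C_pow]
  rw [hR] at hcoeff
  -- the common term
  set G : ℕ → R := fun m =>
    esymmF (n - 1) m u *
      ((-a) ^ ((n - 1 + 1 - m) - (n - k)) * ((n - 1 + 1 - m).choose (n - k) : R)) with hG
  have hG_zero_of_gt : ∀ m, k < m → G m = 0 := by
    intro m hm
    simp only [hG]
    by_cases hmN : m ≤ n - 1
    · have h6 : n - 1 + 1 - m < n - k := by omega
      rw [Nat.choose_eq_zero_of_lt h6]
      simp
    · have h7 : esymmF (n - 1) m u = 0 := esymmF_eq_zero (by omega) u
      rw [h7, zero_mul]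
  have hstep : ∑ m ∈ Finset.range (n - 1 + 1), G m = ∑ m ∈ Finset.range (k + 1), G m := by
    rcases eq_or_lt_of_le hk with hkn | hkn
    · refine Finset.sum_subset (Finset.range_subset_range.mpr (by omega)) ?_
      intro x hx hx'
      simp only [Finset.mem_range] at hx hx'
      have h7 : esymmF (n - 1) x u = 0 := esymmF_eq_zero (by omega) u
      simp only [hG, h7, zero_mul]
    · refine (Finset.sum_subset (Finset.range_subset_range.mpr (by omega : k + 1 ≤ n - 1 + 1)) ?_).symm
      intro x hx hx'
      simp only [Finset.mem_range] at hx hx'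
      exact hG_zero_of_gt x (by omega)
  rw [hstep] at hcoeff
  rw [hcoeff]
  -- reindex
  rw [← Finset.sum_range_reflect]
  refine Finset.sum_congr rfl fun ℓ hℓ => ?_
  have hℓk : ℓ ≤ k := by have := Finset.mem_range.mp hℓ; omega
  have h1 : k + 1 - 1 - ℓ = k - ℓ := by omega
  rw [h1]
  simp only [hG]
  have h2 : (n - 1 + 1 - (k - ℓ)) - (n - k) = ℓ := by omega
  have h3 : n - 1 + 1 - (k - ℓ) = n - k + ℓ := by omega
  rw [h2, h3, neg_pow]
  ring
end

section
/- Define G(u) = sum over k from 0 to n-2 of (-1)^k * (k+1)/(k+3) * u_1^k * S_{n,n-2-k}(u), where S_{n,ℓ} is the elementary symmetric polynomial of degree ℓ in u_1,...,u_{n-1}. For p_m the point with first m coordinates 1 and the rest 0 (1 ≤ m ≤ n-1), G(p_m) = (-1)^n * 2 * (-1)^(m-1) / ((n+1) * C(n,m)); in particular G(p_m) ≠ 0. -/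
open Finset

lemma esymm_indicator_aux (N m k : ℕ) (hm : m ≤ N) :
    esymmF N k (fun i : Fin N => if (i : ℕ) < m then (1:ℂ) else 0) = (m.choose k : ℂ) := by
  classical
  unfold esymmF
  set M : Finset (Fin N) := Finset.univ.filter (fun i : Fin N => (i : ℕ) < m) with hM
  rw [← Finset.sum_filter_add_sum_filter_not (Finset.powersetCard k Finset.univ)
    (fun s => s ⊆ M)]
  have e1 : ∀ s ∈ (Finset.powersetCard k (Finset.univ : Finset (Fin N))).filter (· ⊆ M),
      (∏ i ∈ s, if (i : ℕ) < m then (1:ℂ) else 0) = 1 := by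
    intro s hs
    refine Finset.prod_eq_one fun i hi => ?_
    have h := (Finset.mem_filter.mp hs).2 hi
    rw [hM, Finset.mem_filter] at h
    simp [h.2]
  have e2 : ∀ s ∈ (Finset.powersetCard k (Finset.univ : Finset (Fin N))).filter
      (fun s => ¬ s ⊆ M),
      (∏ i ∈ s, if (i : ℕ) < m then (1:ℂ) else 0) = 0 := by
    intro s hs
    obtain ⟨i, hi, hiM⟩ := Finset.not_subset.mp (Finset.mem_filter.mp hs).2
    refine Finset.prod_eq_zero hi ?_
    have h : ¬ (i : ℕ) < m := by
      intro hlt; exact hiM (by rw [hM, Finset.mem_filter]; exact ⟨Finset.mem_univ i, hlt⟩)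
    simp [h]
  rw [Finset.sum_congr rfl e1, Finset.sum_congr rfl e2, Finset.sum_const,
    Finset.sum_const_zero, add_zero, nsmul_eq_mul, mul_one]
  have h2 : (Finset.powersetCard k (Finset.univ : Finset (Fin N))).filter (· ⊆ M)
      = Finset.powersetCard k M := by
    ext s
    simp only [Finset.mem_filter, Finset.mem_powersetCard, Finset.subset_univ, true_and]
    tauto
  have h3 : M.card = m := by
    rw [hM, Finset.card_filter]
    rw [Fin.sum_univ_eq_sum_range (fun i => if i < m then 1 else 0) N]
    rw [← Finset.card_filter]
    have : Finset.filter (fun i => i < m) (Finset.range N) = Finset.range m := by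
      ext i; simp only [Finset.mem_filter, Finset.mem_range]; omega
    rw [this, Finset.card_range]
  rw [h2, Finset.card_powersetCard, h3]

lemma keyI : ∀ (m : ℕ) (x : ℂ), (∀ i : ℕ, i ≤ m → x + i ≠ 0) →
    ∑ j ∈ range (m+1), (-1:ℂ)^j * (m.choose j) / (x + j)
      = (m.factorial : ℂ) / ∏ i ∈ range (m+1), (x + i) := by
  intro m
  induction m with
  | zero => intro x hx; simp
  | succ m ih =>
    intro x hx
    have hx' : ∀ i : ℕ, i ≤ m → x + i ≠ 0 := fun i hi => hx i (by omega)
    have hx1 : ∀ i : ℕ, i ≤ m → (x + 1) + i ≠ 0 := by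
      intro i hi
      have h := hx (i+1) (by omega)
      push_cast at h ⊢
      intro hc; apply h; rw [← hc]; ring
    have step : ∑ j ∈ range (m+1+1), (-1:ℂ)^j * ((m+1).choose j) / (x + j)
        = (∑ j ∈ range (m+1), (-1:ℂ)^j * (m.choose j) / (x + j))
          - ∑ j ∈ range (m+1), (-1:ℂ)^j * (m.choose j) / ((x+1) + j) := by
      rw [Finset.sum_range_succ' (fun j => (-1:ℂ)^j * ((m+1).choose j) / (x + j)) (m+1)]
      have e : ∀ j ∈ range (m+1),
          (-1:ℂ)^(j+1) * (((m+1).choose (j+1) : ℕ) : ℂ) / (x + ((j+1 : ℕ) : ℂ))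
          = ((-1:ℂ)^(j+1) * ((m.choose (j+1) : ℕ) : ℂ) / (x + ((j+1 : ℕ) : ℂ)))
            - ((-1:ℂ)^j * (m.choose j) / ((x+1) + j)) := by
        intro j hj
        rw [Nat.choose_succ_succ]
        have hne : x + ((j+1 : ℕ) : ℂ) ≠ 0 := hx (j+1) (by simp at hj; omega)
        have hne' : (x+1) + (j : ℂ) ≠ 0 := by
          intro hc; apply hne; rw [← hc]; push_cast; ring
        push_cast at hne hne' ⊢
        field_simp
        ring
      rw [Finset.sum_congr rfl e, Finset.sum_sub_distrib]
      rw [Finset.sum_range_succ' (fun j => (-1:ℂ)^j * (m.choose j) / (x + j)) m]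
      rw [Finset.sum_range_succ (fun j => (-1:ℂ)^(j+1) * ((m.choose (j+1) : ℕ) : ℂ)
        / (x + ((j+1 : ℕ) : ℂ))) m]
      rw [Nat.choose_succ_self]
      push_cast
      simp only [Nat.cast_zero, mul_zero, zero_mul, zero_div, add_zero, Nat.choose_zero_right,
        Nat.cast_one, mul_one, one_mul, pow_zero]
      ring
    rw [step, ih x hx', ih (x+1) hx1]
    have hP : ∀ i ∈ range (m+1), x + (i:ℂ) ≠ 0 := fun i hi => hx i (by simp at hi; omega)
    have hPne : (∏ i ∈ range (m+1), (x + (i:ℂ))) ≠ 0 := Finset.prod_ne_zero_iff.mpr hP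
    have hQ : ∀ i ∈ range (m+1), (x+1) + (i:ℂ) ≠ 0 := fun i hi => hx1 i (by simp at hi; omega)
    have hQne : (∏ i ∈ range (m+1), ((x+1) + (i:ℂ))) ≠ 0 := Finset.prod_ne_zero_iff.mpr hQ
    have q1 : (∏ i ∈ range (m+1+1), (x + (i:ℂ)))
        = (∏ i ∈ range (m+1), (x + (i:ℂ))) * (x + ((m:ℂ)+1)) := by
      rw [Finset.prod_range_succ]; push_cast; ring
    have q2 : (∏ i ∈ range (m+1+1), (x + (i:ℂ)))
        = (∏ i ∈ range (m+1), ((x+1) + (i:ℂ))) * x := by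
      rw [Finset.prod_range_succ' (fun i => x + (i:ℂ)) (m+1)]
      push_cast
      rw [show (∏ i ∈ range (m+1), (x + ((i:ℂ)+1))) = ∏ i ∈ range (m+1), ((x+1) + (i:ℂ)) from
        Finset.prod_congr rfl (fun i _ => by ring)]
      norm_num
    have hRne : (∏ i ∈ range (m+1+1), (x + (i:ℂ))) ≠ 0 := by
      rw [q2]
      exact mul_ne_zero hQne (by simpa using hx 0 (by omega))
    rw [div_sub_div _ _ hPne hQne, div_eq_div_iff (mul_ne_zero hPne hQne) hRne]
    have hfac : (((m+1).factorial : ℕ) : ℂ) = ((m:ℂ)+1) * (m.factorial : ℂ) := by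
      rw [Nat.factorial_succ]; push_cast; ring
    rw [hfac]
    linear_combination ((m.factorial : ℂ) * ∏ i ∈ range (m+1), ((x+1) + (i:ℂ))) * q1
      - ((m.factorial : ℂ) * ∏ i ∈ range (m+1), (x + (i:ℂ))) * q2

lemma prodfac (m n : ℕ) (h : m ≤ n) :
    (∏ i ∈ range (m+1), (n+1-m+i)) * (n-m).factorial = (n+1).factorial := by
  induction m with
  | zero => simp [Nat.factorial_succ]
  | succ m ih =>
    have hm : m ≤ n := by omega
    rw [Finset.prod_range_succ' (fun i => n+1-(m+1)+i) (m+1)]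
    have e : ∀ i ∈ range (m+1), n+1-(m+1)+(i+1) = n+1-m+i := by intro i _; omega
    rw [Finset.prod_congr rfl e, show n+1-(m+1)+0 = n-m by omega]
    have h2 : (n - m) * (n - (m+1)).factorial = (n-m).factorial := by
      rw [show n - (m+1) = (n-m) - 1 by omega]
      exact Nat.mul_factorial_pred (by omega)
    rw [mul_assoc, h2]
    exact ih hm

theorem stmt6 (n m : ℕ) (hn : 3 ≤ n) (hm : 1 ≤ m) (hmn : m ≤ n - 1) :
    let p : Fin (n - 1) → ℂ := fun i => if (i : ℕ) < m then 1 else 0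
    let G : ℂ := ∑ k ∈ Finset.range (n - 1),
      (-1 : ℂ) ^ k * ((k : ℂ) + 1) / ((k : ℂ) + 3) * (p ⟨0, by omega⟩) ^ k *
        esymmF (n - 1) (n - 2 - k) p
    G = (-1 : ℂ) ^ n * 2 * (-1 : ℂ) ^ (m - 1) / (((n : ℂ) + 1) * (Nat.choose n m : ℂ)) ∧
      G ≠ 0 := by
  intro p G
  have hmnn : m ≤ n := by omega
  set t : ℕ → ℂ := fun j =>
    (-1:ℂ)^n * (-1:ℂ)^j * (m.choose j : ℂ) * (1 - 2/((n:ℂ)+1-(j:ℂ))) with ht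
  -- Step 1: unfold G
  have hG1 : G = ∑ k ∈ Finset.range (n - 1),
      (-1 : ℂ) ^ k * ((k : ℂ) + 1) / ((k : ℂ) + 3) * (m.choose (n - 2 - k) : ℂ) := by
    have h0m : 0 < m := hm
    unfold G p
    refine Finset.sum_congr rfl fun k _ => ?_
    rw [esymm_indicator_aux (n-1) m (n-2-k) hmn]
    simp [h0m]
  -- Step 2: reflect
  have hG2 : G = ∑ j ∈ Finset.range (n - 1), t j := by
    rw [hG1, ← Finset.sum_range_reflect t (n-1)]
    refine Finset.sum_congr rfl fun k hk => ?_
    have hk' : k < n - 1 := Finset.mem_range.mp hk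
    rw [show n - 1 - 1 - k = n - 2 - k by omega, ht]
    have hc : ((n - 2 - k : ℕ) : ℂ) = (n:ℂ) - 2 - (k:ℂ) := by
      have h1 : (n - 2 - k) + (k + 2) = n := by omega
      have h2 : (((n - 2 - k) + (k + 2) : ℕ) : ℂ) = (n : ℂ) := by rw [h1]
      push_cast at h2
      linear_combination h2
    have hsgn : (-1:ℂ)^n * (-1:ℂ)^(n - 2 - k) = (-1:ℂ)^k := by
      rw [← pow_add, show n + (n - 2 - k) = 2*((n - 2 - k)+1) + k by omega,
        pow_add, pow_mul]
      norm_num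
    simp only [hsgn, hc]
    have hk3 : (k:ℂ) + 3 ≠ 0 := by
      have h3 : ((k + 3 : ℕ) : ℂ) ≠ 0 := Nat.cast_ne_zero.mpr (by omega)
      push_cast at h3; exact h3
    rw [show (n:ℂ) + 1 - ((n:ℂ) - 2 - (k:ℂ)) = (k:ℂ) + 3 by ring]
    field_simp
    ring
  -- Step 3: adjust range
  have hG3 : G = ∑ j ∈ Finset.range (m + 1), t j := by
    rw [hG2]
    rcases Nat.lt_or_ge (m + 1) n with hlt | hge
    · -- m + 1 ≤ n - 1
      symm
      apply Finset.sum_subset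
      · intro j hj
        simp only [Finset.mem_range] at hj ⊢
        omega
      · intro j _ hj
        simp only [Finset.mem_range, not_lt] at hj
        rw [ht]
        simp [Nat.choose_eq_zero_of_lt (by omega : m < j)]
    · -- m = n - 1
      have hmeq : m = n - 1 := by omega
      rw [show m + 1 = (n-1) + 1 by omega, Finset.sum_range_succ]
      have : t ((n-1)) = 0 := by
        rw [ht]
        have hc : (((n - 1 : ℕ) : ℕ) : ℂ) = (n:ℂ) - 1 := by
          have h1 : (n - 1) + 1 = n := by omega
          have h2 : (((n-1) + 1 : ℕ) : ℂ) = (n:ℂ) := by rw [h1]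
          push_cast at h2
          linear_combination h2
        simp only [hc]
        rw [show (n:ℂ) + 1 - ((n:ℂ) - 1) = 2 by ring]
        norm_num
      rw [this, add_zero]
  -- Step 4: split
  have hsplit : ∑ j ∈ Finset.range (m + 1), t j
      = (-1:ℂ)^n * (∑ j ∈ Finset.range (m + 1), (-1:ℂ)^j * (m.choose j : ℂ))
        - (-1:ℂ)^n * 2 * ∑ j ∈ Finset.range (m + 1),
            (-1:ℂ)^j * (m.choose j : ℂ) / ((n:ℂ)+1-(j:ℂ)) := by
    rw [Finset.mul_sum, Finset.mul_sum, ← Finset.sum_sub_distrib]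
    refine Finset.sum_congr rfl fun j hj => ?_
    have hj' : j < m + 1 := Finset.mem_range.mp hj
    have hne : (n:ℂ) + 1 - (j:ℂ) ≠ 0 := by
      have h1 : (((n + 1 - j : ℕ) : ℕ) : ℂ) = (n:ℂ) + 1 - (j:ℂ) := by
        have e1 : (n + 1 - j) + j = n + 1 := by omega
        have e2 : (((n + 1 - j) + j : ℕ) : ℂ) = (n:ℂ) + 1 := by rw [e1]; push_cast; ring
        push_cast at e2
        linear_combination e2
      rw [← h1]
      exact Nat.cast_ne_zero.mpr (by omega)
    rw [ht]
    field_simp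
  -- Step 5: A = 0
  have hA : (∑ j ∈ Finset.range (m + 1), (-1:ℂ)^j * (m.choose j : ℂ)) = 0 := by
    have h := Int.alternating_sum_range_choose_of_ne (by omega : m ≠ 0)
    have h2 : ((∑ j ∈ Finset.range (m + 1), ((-1)^j * (m.choose j) : ℤ) : ℤ) : ℂ) = 0 := by
      rw [h]; simp
    push_cast at h2
    exact h2
  -- casts for x = n+1-m
  have hcast : ∀ i : ℕ, i ≤ m → ((n + 1 - m + i : ℕ) : ℂ) = (n:ℂ)+1-(m:ℂ)+(i:ℂ) := by
    intro i hi
    have h1 : (n+1-m+i) + m = n + 1 + i := by omega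
    have h2 : ((n+1-m+i : ℕ) : ℂ) + (m:ℂ) = (n:ℂ) + 1 + (i:ℂ) := by
      exact_mod_cast congrArg (Nat.cast : ℕ → ℂ) h1
    linear_combination h2
  have hxne : ∀ i : ℕ, i ≤ m → ((n:ℂ)+1-(m:ℂ)) + (i:ℂ) ≠ 0 := by
    intro i hi
    rw [show ((n:ℂ)+1-(m:ℂ)) + (i:ℂ) = (n:ℂ)+1-(m:ℂ)+(i:ℂ) by ring, ← hcast i hi]
    exact Nat.cast_ne_zero.mpr (by omega)
  have hkey := keyI m ((n:ℂ)+1-(m:ℂ)) hxne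
  -- Step 6: B via reflection
  have hB : (∑ j ∈ Finset.range (m+1), (-1:ℂ)^j * (m.choose j : ℂ) / ((n:ℂ)+1-(j:ℂ)))
      = (-1:ℂ)^m * ((m.factorial : ℂ)
          / ∏ i ∈ Finset.range (m+1), (((n:ℂ)+1-(m:ℂ)) + (i:ℂ))) := by
    rw [← hkey, Finset.mul_sum, ← Finset.sum_range_reflect
      (fun j => (-1:ℂ)^m * ((-1:ℂ)^j * (m.choose j : ℂ) / (((n:ℂ)+1-(m:ℂ)) + (j:ℂ)))) (m+1)]
    refine Finset.sum_congr rfl fun j hj => ?_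
    have hj' : j < m + 1 := Finset.mem_range.mp hj
    rw [show m + 1 - 1 - j = m - j by omega]
    have hcs : m.choose (m - j) = m.choose j := Nat.choose_symm (by omega : j ≤ m)
    have hsgn2 : (-1:ℂ)^m * (-1:ℂ)^(m-j) = (-1:ℂ)^j := by
      rw [← pow_add, show m + (m - j) = 2*(m - j) + j by omega, pow_add, pow_mul]
      norm_num
    have hmj : ((m - j : ℕ) : ℂ) = (m:ℂ) - (j:ℂ) := by
      have h1 : (m - j) + j = m := by omega
      have h2 : (((m - j) + j : ℕ) : ℂ) = (m : ℂ) := by rw [h1]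
      push_cast at h2
      linear_combination h2
    rw [hcs, hmj]
    rw [show (-1:ℂ)^m * ((-1:ℂ)^(m-j) * (m.choose j : ℂ)
          / (((n:ℂ)+1-(m:ℂ)) + ((m:ℂ)-(j:ℂ))))
        = ((-1:ℂ)^m * (-1:ℂ)^(m-j)) * ((m.choose j : ℂ)
          / (((n:ℂ)+1-(m:ℂ)) + ((m:ℂ)-(j:ℂ)))) by ring, hsgn2]
    rw [show ((n:ℂ)+1-(m:ℂ)) + ((m:ℂ)-(j:ℂ)) = (n:ℂ)+1-(j:ℂ) by ring]
    ring
  -- Step 7: the product as a natural number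
  have hPcast : (∏ i ∈ Finset.range (m+1), (((n:ℂ)+1-(m:ℂ)) + (i:ℂ)))
      = ((∏ i ∈ Finset.range (m+1), (n+1-m+i) : ℕ) : ℂ) := by
    rw [Nat.cast_prod]
    refine Finset.prod_congr rfl fun i hi => ?_
    have hi' : i < m + 1 := Finset.mem_range.mp hi
    rw [hcast i (by omega)]
    try ring
  have hPn : (∏ i ∈ Finset.range (m+1), (n+1-m+i)) = (n+1) * (n.choose m) * m.factorial := by
    have h := prodfac m n hmnn
    have h2 := Nat.choose_mul_factorial_mul_factorial hmnn
    apply Nat.eq_of_mul_eq_mul_right (Nat.factorial_pos (n-m))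
    rw [h, Nat.factorial_succ, ← h2]
    ring
  -- nonzeroness facts
  have hne1 : ((n:ℂ)+1) ≠ 0 := by
    have h3 : ((n + 1 : ℕ) : ℂ) ≠ 0 := Nat.cast_ne_zero.mpr (by omega)
    push_cast at h3; exact h3
  have hne2 : ((n.choose m : ℕ) : ℂ) ≠ 0 := Nat.cast_ne_zero.mpr (Nat.choose_pos hmnn).ne'
  have hne3 : ((m.factorial : ℕ) : ℂ) ≠ 0 := Nat.cast_ne_zero.mpr (Nat.factorial_pos m).ne'
  -- final value
  have hval : G = (-1 : ℂ)^n * 2 * (-1:ℂ)^(m-1) / (((n:ℂ)+1) * (n.choose m : ℂ)) := by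
    rw [hG3, hsplit, hA, hB, hPcast, hPn]
    have hm1 : (-1:ℂ)^m = (-1:ℂ)^(m-1) * (-1) := by
      rw [← pow_succ, show m - 1 + 1 = m by omega]
    rw [hm1]
    push_cast
    field_simp
    try ring
  refine ⟨hval, ?_⟩
  rw [hval]
  apply div_ne_zero
  · exact mul_ne_zero (mul_ne_zero (pow_ne_zero _ (by norm_num)) two_ne_zero)
      (pow_ne_zero _ (by norm_num))
  · exact mul_ne_zero hne1 hne2
end

section
/- With G_1(u) = sum over k from 0 to n-2 of (-1)^k * (k+1)/(k+3) * u_1^k * S_{n,n-2-k}(u) and T the linear map T(u_1,...,u_{n-1}) = (-u_1, u_2-u_1, ..., u_{n-1}-u_1), we have G_1(T u) = G_1(u) as polynomials, for all n ≥ 3. -/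
/-!
Write `∏ᵢ (z + vᵢ) = (z + v₀) Q_v(z)`; the `esymmF N (N - 1 - k) v` are its coefficients. Since
`(k+1)/(k+3) - k/(k+2) = 2/((k+2)(k+3))`, collecting the coefficients `qᵢ` of `Q_v` turns `G v` into
`2 ∑ qᵢ (-v₀)ⁱ / ((i+2)(i+3)) = 2 ∫₀¹ t(1-t) Q_v(-v₀ t) dt`. For `v = T u` one has
`Q_{Tu}(z) = Q_u(z - u₀)`, so `G (T u) = 2 ∫₀¹ t(1-t) Q_u(-u₀ (1-t)) dt`, and the substitution
`t ↦ 1 - t`, which fixes the weight `t(1-t)`, turns this into `G u`.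
-/

open Finset Polynomial

theorem esymmF_eq_coeff_prod_X_add_C {R : Type*} [CommRing R] {N k : ℕ} (hk : k ≤ N)
    (u : Fin N → R) : esymmF N k u = (∏ i, (X + C (u i))).coeff (N - k) := by
  rw [prod_X_add_C_coeff _ _ (by simp), card_univ, Fintype.card_fin, Nat.sub_sub_self hk]
  rfl

theorem coeff_X_add_C_mul_succ {R : Type*} [CommRing R] (a : R) (Q : R[X]) (k : ℕ) :
    ((X + C a) * Q).coeff (k + 1) = Q.coeff k + a * Q.coeff (k + 1) := by
  simp [add_mul, coeff_X_mul, coeff_C_mul]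

theorem sum_coeff_X_add_C_mul {K : Type*} [Field K] [CharZero K] (a : K) (Q : K[X]) {m : ℕ}
    (hQ : Q.natDegree ≤ m) :
    ∑ k ∈ range (m + 1), (-1) ^ k * ((k : K) + 1) / ((k : K) + 3) * a ^ k *
        ((X + C a) * Q).coeff (k + 1) =
      2 * ∑ i ∈ range (m + 1), Q.coeff i * (-a) ^ i / (((i : K) + 2) * ((i : K) + 3)) := by
  -- `f i` collects the `a * Q.coeff i` part of the `k = i - 1` term; it vanishes at `i = 0`
  -- and, by the degree bound, at `i = m + 1`.
  set f : ℕ → K := fun i => -((-1) ^ i * (i : K) / ((i : K) + 2) * a ^ i * Q.coeff i)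
  have hshift : ∑ k ∈ range (m + 1), (-1) ^ k * ((k : K) + 1) / ((k : K) + 3) * a ^ k *
      (a * Q.coeff (k + 1)) = ∑ i ∈ range (m + 1), f i := by
    have hlast : f (m + 1) = 0 := by
      simp [f, coeff_eq_zero_of_natDegree_lt (Nat.lt_succ_of_le hQ)]
    have h := (sum_range_succ' f (m + 1)).symm.trans (sum_range_succ f (m + 1))
    simp only [hlast, add_zero, f, CharP.cast_eq_zero, mul_zero, zero_div, zero_mul, neg_zero] at h
    rw [← h]
    refine sum_congr rfl fun k _ => ?_
    push_cast
    ring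
  have hsplit : ∀ k : ℕ,
      (-1) ^ k * ((k : K) + 1) / ((k : K) + 3) * a ^ k * ((X + C a) * Q).coeff (k + 1) =
        (-1) ^ k * ((k : K) + 1) / ((k : K) + 3) * a ^ k * Q.coeff k +
        (-1) ^ k * ((k : K) + 1) / ((k : K) + 3) * a ^ k * (a * Q.coeff (k + 1)) := fun k => by
    rw [coeff_X_add_C_mul_succ, mul_add]
  rw [sum_congr rfl fun k _ => hsplit k, sum_add_distrib, hshift, ← sum_add_distrib, mul_sum]
  refine sum_congr rfl fun i _ => ?_
  have h2 : (i : K) + 2 ≠ 0 := by norm_cast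
  have h3 : (i : K) + 3 ≠ 0 := by norm_cast
  simp only [f, neg_pow a]
  field_simp
  ring

theorem integral_ofReal_pow (n : ℕ) : ∫ t in (0 : ℝ)..1, (t : ℂ) ^ n = 1 / ((n : ℂ) + 1) := by
  simp_rw [← Complex.ofReal_pow, intervalIntegral.integral_ofReal, integral_pow]
  push_cast
  simp

theorem integral_mul_one_sub_mul_eval (Q : ℂ[X]) (b : ℂ) {m : ℕ} (hQ : Q.natDegree ≤ m) :
    ∫ t in (0 : ℝ)..1, (t * (1 - t) : ℂ) * Q.eval (b * t) =
      ∑ i ∈ range (m + 1), Q.coeff i * b ^ i / (((i : ℂ) + 2) * ((i : ℂ) + 3)) := by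
  have hint {f : ℝ → ℂ} (hf : Continuous f) : IntervalIntegrable f MeasureTheory.volume 0 1 :=
    hf.intervalIntegrable _ _
  simp_rw [eval_eq_sum_range' (Nat.lt_succ_of_le hQ), mul_sum]
  rw [intervalIntegral.integral_finsetSum fun i _ => hint (by fun_prop)]
  refine sum_congr rfl fun i _ => ?_
  have h : ∀ t : ℝ, (t * (1 - t) : ℂ) * (Q.coeff i * (b * t) ^ i) =
      Q.coeff i * b ^ i * ((t : ℂ) ^ (i + 1) - (t : ℂ) ^ (i + 2)) := fun t => by ring
  simp_rw [h]
  rw [intervalIntegral.integral_const_mul,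
    intervalIntegral.integral_sub (hint (by fun_prop)) (hint (by fun_prop)),
    integral_ofReal_pow, integral_ofReal_pow]
  have h2 : (i : ℂ) + 2 ≠ 0 := by norm_cast
  have h3 : (i : ℂ) + 3 ≠ 0 := by norm_cast
  have e2 : ((i + 1 : ℕ) : ℂ) + 1 = i + 2 := by push_cast; ring
  have e3 : ((i + 2 : ℕ) : ℂ) + 1 = i + 3 := by push_cast; ring
  rw [e2, e3]
  field_simp
  ring

theorem sum_esymmF_eq_integral {N : ℕ} (v : Fin N → ℂ) (i0 : Fin N) :
    ∑ k ∈ range N, (-1 : ℂ) ^ k * ((k : ℂ) + 1) / ((k : ℂ) + 3) * (v i0) ^ k *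
        esymmF N (N - 1 - k) v =
      2 * ∫ t in (0 : ℝ)..1, (t * (1 - t) : ℂ) *
        (∏ i ∈ univ.erase i0, (X + C (v i))).eval (-v i0 * t) := by
  set Q := ∏ i ∈ univ.erase i0, (X + C (v i))
  have hQ : Q.natDegree ≤ N - 1 :=
    (natDegree_prod_le _ _).trans (by simp [card_erase_of_mem])
  obtain ⟨m, rfl⟩ : ∃ m, N = m + 1 := ⟨N - 1, by have := i0.pos; omega⟩
  rw [integral_mul_one_sub_mul_eval Q _ hQ, ← sum_coeff_X_add_C_mul (v i0) Q hQ]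
  refine sum_congr rfl fun k hk => ?_
  rw [mem_range] at hk
  rw [esymmF_eq_coeff_prod_X_add_C (by omega), ← mul_prod_erase univ _ (mem_univ i0),
    show m + 1 - (m + 1 - 1 - k) = k + 1 by omega]

theorem stmt11 (n : ℕ) (hn : 3 ≤ n) (u : Fin (n - 1) → ℂ) :
    let i0 : Fin (n - 1) := ⟨0, by omega⟩
    let T : Fin (n - 1) → ℂ := fun j => if j = i0 then -u i0 else u j - u i0
    let G : (Fin (n - 1) → ℂ) → ℂ := fun v =>
      ∑ k ∈ Finset.range (n - 1),
        (-1 : ℂ) ^ k * ((k : ℂ) + 1) / ((k : ℂ) + 3) * (v i0) ^ k *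
          esymmF (n - 1) (n - 2 - k) v
    G T = G u := by
  intro i0 T G
  have hG (v : Fin (n - 1) → ℂ) : G v = 2 * ∫ t in (0 : ℝ)..1, (t * (1 - t) : ℂ) *
      (∏ i ∈ univ.erase i0, (X + C (v i))).eval (-v i0 * t) := by
    rw [← sum_esymmF_eq_integral, Nat.sub_sub]
  have hsymm := intervalIntegral.integral_comp_sub_left (a := 0) (b := 1) (fun t : ℝ =>
    (t * (1 - t) : ℂ) * (∏ i ∈ univ.erase i0, (X + C (u i))).eval (-u i0 * t)) 1
  rw [sub_self, sub_zero] at hsymm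
  rw [hG, hG, ← hsymm]
  congr 1
  refine intervalIntegral.integral_congr fun t _ => ?_
  have hT0 : T i0 = -u i0 := if_pos rfl
  simp only [eval_prod, eval_add, eval_X, eval_C, hT0, Complex.ofReal_sub, Complex.ofReal_one]
  congr 1
  · ring
  · refine prod_congr rfl fun i hi => ?_
    rw [show T i = u i - u i0 from if_neg (ne_of_mem_erase hi)]
    ring
end

section
/- Let g_ℓ(u) = u_ℓ^3 G_ℓ(u) with G_ℓ(u) = sum_{k=0}^{n-2} (-1)^k (k+1)/(k+3) u_ℓ^k S_{n,n-2-k}(u), and let p_m = (1,...,1,0,...,0) with m ones (1 ≤ m ≤ n-1). Then the Jacobian matrix Dg(p_m) has rank 1: its last n-1-m rows vanish and its first m rows are all equal to one another. -/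
/-!
Write `g_ℓ = X_ℓ ^ 3 * F_ℓ`. A row with `p_ℓ = 0` vanishes because of the factor `X_ℓ ^ 3`.
For `p_ℓ = 1` the row is `δ_{ℓ j} A + W_j`, where `W_j = ∑_k c_k (∂_j S_{n,n-2-k})(p)` does not
depend on `ℓ` and `A = ∑_k (-1)^k (k+1) C(m, n-2-k)`; reflecting the index, `A` is an `m`-th
finite difference of a linear function, so it vanishes once two rows are compared (`m ≥ 2`).
Hence `Dg(p)` is the outer product of `p` with its first row, and that row is nonzero by Euler's
identity: `g_ℓ` is homogeneous of degree `n + 1`, so `∑_j p_j ∂_j g_ℓ(p) = (n + 1) g_ℓ(p)`, and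
`g_ℓ(p) = ∑_k (-1)^k (k+1)/(k+3) C(m, n-2-k)` is nonzero by the partial fraction expansion
`∑_j (-1)^j C(t, j) / (N - j) = (-1)^t t! (N-t-1)! / N!`.
-/

open MvPolynomial Finset

section BinomialSums

variable {R : Type*} [CommRing R]

theorem neg_one_pow_sub_of_le {j M : ℕ} (h : j ≤ M) :
    (-1 : R) ^ (M - j) = (-1) ^ M * (-1) ^ j := by
  obtain ⟨d, rfl⟩ := Nat.exists_eq_add_of_le h
  rw [Nat.add_sub_cancel_left, pow_add, mul_comm, ← mul_assoc, ← mul_pow]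
  simp

theorem sum_range_mul_choose_of_lt (f : ℕ → R) {m L : ℕ} (h : m < L) :
    ∑ j ∈ range L, f j * m.choose j = ∑ j ∈ range (m + 1), f j * m.choose j := by
  refine (sum_subset (range_subset_range.2 h) fun j _ hj => ?_).symm
  rw [Nat.choose_eq_zero_of_lt (by simpa using hj), Nat.cast_zero, mul_zero]

theorem sum_range_mul_choose_sub_reflect (f : ℕ → R) (m M : ℕ) :
    ∑ k ∈ range (M + 1), f k * m.choose (M - k) =
      ∑ j ∈ range (M + 1), f (M - j) * m.choose j := by
  rw [← sum_range_reflect]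
  refine sum_congr rfl fun j hj => ?_
  rw [add_tsub_cancel_right, Nat.sub_sub_self (Nat.lt_succ_iff.1 (mem_range.1 hj))]

theorem sum_range_neg_one_pow_mul_eval_mul_choose {P : Polynomial R} {m : ℕ}
    (hP : P.natDegree < m) :
    ∑ j ∈ range (m + 1), (-1) ^ j * P.eval (j : R) * m.choose j = 0 := by
  have h := congr_fun (Polynomial.fwdDiff_iter_eq_zero_of_degree_lt hP) 0
  rw [fwdDiff_iter_eq_sum_shift, Pi.zero_apply] at h
  have hsq : (-1 : R) ^ m * (-1) ^ m = 1 := by rw [← mul_pow]; simp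
  calc _ = (-1) ^ m * ∑ j ∈ range (m + 1),
          ((-1 : ℤ) ^ (m - j) * m.choose j) • P.eval (0 + j • 1 : R) := by
        rw [mul_sum]
        refine sum_congr rfl fun j hj => ?_
        rw [neg_one_pow_sub_of_le (Nat.lt_succ_iff.1 (mem_range.1 hj)), zero_add, nsmul_one,
          zsmul_eq_mul]
        push_cast
        linear_combination (-(-1 : R) ^ j * P.eval (j : R) * m.choose j) * hsq
    _ = 0 := by rw [h, mul_zero]

theorem sum_range_neg_one_pow_mul_choose {m : ℕ} (hm : 1 ≤ m) :
    ∑ j ∈ range (m + 1), (-1 : R) ^ j * m.choose j = 0 := by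
  simpa using sum_range_neg_one_pow_mul_eval_mul_choose (P := Polynomial.C (1 : R)) (by simpa)

theorem sum_range_neg_one_pow_mul_succ_mul_choose {m M : ℕ} (h2m : 2 ≤ m) (hmM : m ≤ M + 1) :
    ∑ k ∈ range (M + 1), (-1 : R) ^ k * (k + 1) * m.choose (M - k) = 0 := by
  calc _ = (-1 : R) ^ M * ∑ j ∈ range (M + 2), (-1) ^ j * ((M + 1 : R) - j) * m.choose j := by
        rw [sum_range_mul_choose_sub_reflect, sum_range_succ _ (M + 1)]
        simp only [Nat.cast_add, Nat.cast_one, sub_self, mul_zero, zero_mul, add_zero, mul_sum]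
        refine sum_congr rfl fun j hj => ?_
        have hjM := Nat.lt_succ_iff.1 (mem_range.1 hj)
        rw [neg_one_pow_sub_of_le hjM, Nat.cast_sub hjM]
        ring
    _ = (-1 : R) ^ M * ∑ j ∈ range (m + 1),
          (-1 : R) ^ j * Polynomial.eval (j : R) (Polynomial.C ((M : R) + 1) - Polynomial.X) *
            m.choose j := by
        rw [sum_range_mul_choose_of_lt _ (by omega)]
        simp
    _ = 0 := by
        rw [sum_range_neg_one_pow_mul_eval_mul_choose, mul_zero]
        exact (Polynomial.natDegree_sub_le _ _).trans_lt
          (max_lt (by rw [Polynomial.natDegree_C]; omega) (Polynomial.natDegree_X_le.trans_lt h2m))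

end BinomialSums

section PartialFractions

open Nat

variable {F : Type*} [Field F] [CharZero F]

theorem sum_range_neg_one_pow_div_mul_choose_succ (t : ℕ) (c : F) :
    ∑ j ∈ range (t + 2), (-1) ^ j / (c - j) * (t + 1).choose j =
      ∑ j ∈ range (t + 1), (-1) ^ j / (c - j) * t.choose j -
        ∑ j ∈ range (t + 1), (-1) ^ j / (c - 1 - j) * t.choose j := by
  have pascal : ∑ k ∈ range (t + 1),
      (-1 : F) ^ (k + 1) / (c - (k + 1 : ℕ)) * (t + 1).choose (k + 1) =
      ∑ k ∈ range (t + 1), (-1) ^ (k + 1) / (c - (k + 1 : ℕ)) * t.choose (k + 1) -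
        ∑ k ∈ range (t + 1), (-1) ^ k / (c - 1 - k) * t.choose k := by
    rw [← sum_sub_distrib]
    refine sum_congr rfl fun k _ => ?_
    push_cast [Nat.choose_succ_succ]
    ring
  have shift_lhs := sum_range_succ' (fun j => (-1 : F) ^ j / (c - j) * (t + 1).choose j) (t + 1)
  have shift_rhs := sum_range_succ' (fun j => (-1 : F) ^ j / (c - j) * t.choose j) (t + 1)
  have top := sum_range_succ (fun j => (-1 : F) ^ j / (c - j) * t.choose j) (t + 1)
  simp only [Nat.choose_zero_right, Nat.choose_succ_self, Nat.cast_zero, mul_zero,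
    add_zero] at shift_lhs shift_rhs top
  linear_combination shift_lhs + pascal - shift_rhs + top

theorem sum_range_neg_one_pow_div_mul_choose {t N : ℕ} (h : t < N) :
    ∑ j ∈ range (t + 1), (-1 : F) ^ j / (N - j) * t.choose j =
      (-1) ^ t * t ! * (N - t - 1)! / N ! := by
  induction t generalizing N with
  | zero =>
    obtain ⟨N, rfl⟩ := Nat.exists_eq_add_of_lt h
    have : (N ! : F) ≠ 0 := Nat.cast_ne_zero.2 N.factorial_ne_zero
    simp [Nat.factorial_succ]
    field_simp
  | succ t ih =>
    obtain ⟨a, rfl⟩ : ∃ a, N = t + 2 + a := ⟨N - (t + 2), by omega⟩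
    have hN : ((t + 2 + a : ℕ) : F) - 1 = ((t + 1 + a : ℕ) : F) := by push_cast; ring
    rw [sum_range_neg_one_pow_div_mul_choose_succ, hN, ih (by omega), ih (by omega)]
    rw [show t + 2 + a - t - 1 = a + 1 by omega, show t + 1 + a - t - 1 = a by omega,
      show t + 2 + a - (t + 1) - 1 = a by omega, show t + 2 + a = (t + 1 + a) + 1 by omega]
    have : ((t + 1 + a)! : F) ≠ 0 := Nat.cast_ne_zero.2 (Nat.factorial_ne_zero _)
    have : ((t + 1 + a + 1 : ℕ) : F) ≠ 0 := Nat.cast_ne_zero.2 (Nat.succ_ne_zero _)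
    simp only [Nat.factorial_succ, Nat.cast_mul]
    field_simp
    push_cast
    ring

theorem sum_range_neg_one_pow_mul_succ_div_mul_choose_ne_zero {m M : ℕ} (h1m : 1 ≤ m)
    (hmM : m ≤ M + 1) :
    ∑ k ∈ range (M + 1), (-1 : F) ^ k * (k + 1) / (k + 3) * m.choose (M - k) ≠ 0 := by
  calc _ = (-1 : F) ^ M * ∑ j ∈ range (M + 2),
          ((-1) ^ j - 2 * ((-1) ^ j / (((M + 3 : ℕ) : F) - j))) * m.choose j := by
        rw [sum_range_mul_choose_sub_reflect, sum_range_succ _ (M + 1), mul_add, mul_sum]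
        have htop :
            (-1 : F) ^ (M + 1) - 2 * ((-1) ^ (M + 1) / (((M + 3 : ℕ) : F) - (M + 1 : ℕ))) = 0 := by
          push_cast
          ring
        rw [htop, zero_mul, mul_zero, add_zero]
        refine sum_congr rfl fun j hj => ?_
        have hjM := Nat.lt_succ_iff.1 (mem_range.1 hj)
        have hden : ((M + 3 : ℕ) : F) - j ≠ 0 := by
          rw [← Nat.cast_sub (by omega)]
          exact Nat.cast_ne_zero.2 (by omega)
        have hden' : ((M - j : ℕ) : F) + 3 ≠ 0 := by exact_mod_cast Nat.succ_ne_zero (M - j + 2)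
        rw [neg_one_pow_sub_of_le hjM]
        field_simp
        push_cast [Nat.cast_sub hjM]
        ring
    _ = (-1 : F) ^ M * (0 - 2 * ((-1) ^ m * m ! * (M + 3 - m - 1)! / (M + 3)!)) := by
        rw [sum_range_mul_choose_of_lt _ (by omega)]
        simp only [sub_mul, sum_sub_distrib, mul_assoc (2 : F), ← mul_sum]
        rw [sum_range_neg_one_pow_mul_choose h1m, sum_range_neg_one_pow_div_mul_choose (by omega)]
    _ ≠ 0 := by
        simp [Nat.factorial_ne_zero]

end PartialFractions

namespace MvPolynomial

variable {σ R : Type*}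

theorem isHomogeneous_esymm [CommSemiring R] [Fintype σ] (r : ℕ) :
    (esymm σ R r).IsHomogeneous r := by
  refine IsHomogeneous.sum _ _ _ fun t ht => ?_
  simpa [mem_powersetCard_univ.1 ht] using
    IsHomogeneous.prod t (fun i => (X i : MvPolynomial σ R)) (fun _ => 1)
      fun i _ => isHomogeneous_X R i

theorem eval_esymm_ite [CommSemiring R] [Fintype σ] (P : σ → Prop) [DecidablePred P] (r : ℕ) :
    eval (fun i => if P i then 1 else 0) (esymm σ R r) = (#{i | P i}).choose r := by
  simp only [esymm, map_sum, map_prod, eval_X, prod_boole, Finset.sum_boole]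
  rw [← card_powersetCard]
  congr 2
  ext t
  simp [subset_iff, and_comm]

theorem IsHomogeneous.sum_mul_eval_pderiv [CommSemiring R] [Fintype σ] {φ : MvPolynomial σ R}
    {n : ℕ} (h : φ.IsHomogeneous n) (x : σ → R) :
    ∑ j, x j * eval x (pderiv j φ) = n * eval x φ := by
  simpa using congr_arg (eval x) h.sum_X_mul_pderiv

theorem IsHomogeneous.eval_pderiv_ne_zero [CommSemiring R] [NoZeroDivisors R] [Fintype σ]
    {φ : MvPolynomial σ R} {n : ℕ} (h : φ.IsHomogeneous n) (hn : (n : R) ≠ 0) {x : σ → R}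
    (hφ : eval x φ ≠ 0) : (fun j => eval x (pderiv j φ)) ≠ 0 := by
  intro h0
  have euler := h.sum_mul_eval_pderiv x
  simp only [fun j => congr_fun h0 j, Pi.zero_apply, mul_zero, sum_const_zero] at euler
  exact mul_ne_zero hn hφ euler.symm

variable [CommSemiring R] {x : σ → R} {i : σ}

theorem eval_pderiv_X_pow_mul_of_eq_zero (hx : x i = 0) (j : σ) {a : ℕ} (ha : 2 ≤ a)
    (Q : MvPolynomial σ R) : eval x (pderiv j (X i ^ a * Q)) = 0 := by
  obtain ⟨b, rfl⟩ := Nat.exists_eq_add_of_le' ha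
  simp [hx]

theorem eval_pderiv_X_pow_mul_of_eq_one [DecidableEq σ] (hx : x i = 1) (j : σ) (a : ℕ)
    (Q : MvPolynomial σ R) :
    eval x (pderiv j (X i ^ a * Q)) =
      (if j = i then (a : R) else 0) * eval x Q + eval x (pderiv j Q) := by
  rcases eq_or_ne j i with rfl | hji
  · simp [hx, mul_comm]
  · simp [pderiv_X_of_ne hji.symm, hx, hji]

theorem eval_pderiv_X_pow_mul_sum_of_eq_one [DecidableEq σ] (hx : x i = 1) (j : σ) (a L : ℕ)
    (c : ℕ → R) (E : ℕ → MvPolynomial σ R) :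
    eval x (pderiv j (X i ^ a * ∑ k ∈ range L, C (c k) * X i ^ k * E k)) =
      (if j = i then ∑ k ∈ range L, c k * (k + a) * eval x (E k) else 0) +
        ∑ k ∈ range L, c k * eval x (pderiv j (E k)) := by
  simp only [eval_pderiv_X_pow_mul_of_eq_one hx, map_sum, mul_assoc, pderiv_C_mul, map_mul,
    map_pow, eval_C, eval_X, hx, one_pow, one_mul]
  split_ifs
  · simp only [Finset.mul_sum, ← sum_add_distrib]
    exact sum_congr rfl fun k _ => by ring
  · simp

theorem eval_pderiv_X_pow_mul_sum_eq_of_eq_one [DecidableEq σ] {i' : σ} (hx : x i = 1)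
    (hx' : x i' = 1) {a L : ℕ} {c : ℕ → R} {E : ℕ → MvPolynomial σ R}
    (hdiag : ∑ k ∈ range L, c k * (k + a) * eval x (E k) = 0) (j : σ) :
    eval x (pderiv j (X i ^ a * ∑ k ∈ range L, C (c k) * X i ^ k * E k)) =
      eval x (pderiv j (X i' ^ a * ∑ k ∈ range L, C (c k) * X i' ^ k * E k)) := by
  rw [eval_pderiv_X_pow_mul_sum_of_eq_one hx, eval_pderiv_X_pow_mul_sum_of_eq_one hx', hdiag,
    ite_self, ite_self]

theorem isHomogeneous_X_pow_mul_sum_esymm [Fintype σ] (a M : ℕ) {L : ℕ} (hL : L ≤ M + 1)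
    (c : ℕ → R) (i : σ) :
    (X i ^ a * ∑ k ∈ range L, C (c k) * X i ^ k * esymm σ R (M - k)).IsHomogeneous
      (a + M) := by
  refine (isHomogeneous_X_pow i a).mul (IsHomogeneous.sum _ _ _ fun k hk => ?_)
  have hkM : k + (M - k) = M := by have := mem_range.1 hk; omega
  simpa [hkM] using
    (isHomogeneous_C_mul_X_pow (c k) i k).mul (isHomogeneous_esymm (σ := σ) (R := R) (M - k))

end MvPolynomial

theorem Matrix.rank_vecMulVec_of_ne_zero {K m n : Type*} [Field K] [Fintype m] [Fintype n]
    {v : m → K} {w : n → K} (hv : v ≠ 0) (hw : w ≠ 0) : (vecMulVec v w).rank = 1 := by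
  classical
  refine le_antisymm (rank_vecMulVec_le v w) (Nat.one_le_iff_ne_zero.2 fun h => ?_)
  rw [Matrix.rank, Submodule.finrank_eq_zero, LinearMap.range_eq_bot] at h
  have : vecMulVec v w = 0 := by
    ext i j
    simpa [Matrix.mulVec_single] using congr_fun (LinearMap.congr_fun h (Pi.single j 1)) i
  obtain ⟨i, hi⟩ := Function.ne_iff.1 hv
  obtain ⟨j, hj⟩ := Function.ne_iff.1 hw
  exact mul_ne_zero hi hj (congr_fun₂ this i j)

theorem stmt19_general (n m : ℕ) (hm : 1 ≤ m) (hmn : m ≤ n - 1) :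
    let gpoly : Fin (n - 1) → MvPolynomial (Fin (n - 1)) ℂ := fun ℓ =>
      (X ℓ) ^ 3 * ∑ k ∈ Finset.range (n - 1),
        MvPolynomial.C ((-1 : ℂ) ^ k * ((k : ℂ) + 1) / ((k : ℂ) + 3)) * (X ℓ) ^ k *
          MvPolynomial.esymm (Fin (n - 1)) ℂ (n - 2 - k)
    let p : Fin (n - 1) → ℂ := fun i => if (i : ℕ) < m then 1 else 0
    let J : Matrix (Fin (n - 1)) (Fin (n - 1)) ℂ := fun i j =>
      MvPolynomial.eval p (MvPolynomial.pderiv j (gpoly i))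
    (∀ i : Fin (n - 1), m ≤ (i : ℕ) → ∀ j, J i j = 0) ∧
      (∀ i i' : Fin (n - 1), (i : ℕ) < m → (i' : ℕ) < m → ∀ j, J i j = J i' j) ∧
      J.rank = 1 := by
  intro gpoly p J
  have hp_one (i : Fin (n - 1)) (hi : (i : ℕ) < m) : p i = 1 := if_pos hi
  have hp_zero (i : Fin (n - 1)) (hi : m ≤ (i : ℕ)) : p i = 0 := if_neg (by omega)
  have heval_esymm (r : ℕ) : eval p (esymm (Fin (n - 1)) ℂ r) = m.choose r := by
    rw [eval_esymm_ite, Fin.card_filter_val_lt, min_eq_right hmn]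
  have rows_zero (i : Fin (n - 1)) (hi : m ≤ (i : ℕ)) (j) : J i j = 0 :=
    eval_pderiv_X_pow_mul_of_eq_zero (hp_zero i hi) j (by norm_num) _
  have rows_eq (i i' : Fin (n - 1)) (hi : (i : ℕ) < m) (hi' : (i' : ℕ) < m) (j) :
      J i j = J i' j := by
    rcases eq_or_ne i i' with rfl | hii'
    · rfl
    refine eval_pderiv_X_pow_mul_sum_eq_of_eq_one (hp_one i hi) (hp_one i' hi') ?_ j
    simp only [heval_esymm, Nat.cast_ofNat]
    rw [show n - 1 = n - 2 + 1 by omega,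
      ← sum_range_neg_one_pow_mul_succ_mul_choose (R := ℂ) (M := n - 2) (m := m) (by omega)
        (by omega)]
    refine sum_congr rfl fun k _ => ?_
    have : (k : ℂ) + 3 ≠ 0 := by exact_mod_cast Nat.succ_ne_zero (k + 2)
    field_simp
  refine ⟨rows_zero, rows_eq, ?_⟩
  let i₀ : Fin (n - 1) := ⟨0, by omega⟩
  have hi₀ : (i₀ : ℕ) < m := hm
  have hJ : J = Matrix.vecMulVec p (J i₀) := by
    ext i j
    rw [Matrix.vecMulVec_apply]
    rcases lt_or_ge (i : ℕ) m with hi | hi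
    · rw [hp_one i hi, one_mul, rows_eq i i₀ hi hi₀]
    · rw [hp_zero i hi, zero_mul, rows_zero i hi]
  have hp : p ≠ 0 := Function.ne_iff.2 ⟨i₀, by simp [hp_one i₀ hi₀]⟩
  have hg : eval p (gpoly i₀) ≠ 0 := by
    simp only [gpoly, map_mul, map_pow, map_sum, eval_X, eval_C, hp_one i₀ hi₀, heval_esymm,
      one_pow, one_mul, mul_one]
    rw [show n - 1 = n - 2 + 1 by omega]
    exact sum_range_neg_one_pow_mul_succ_div_mul_choose_ne_zero hm (by omega)
  have hrow : J i₀ ≠ 0 :=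
    (isHomogeneous_X_pow_mul_sum_esymm 3 (n - 2) (L := n - 1) (by omega) _ i₀).eval_pderiv_ne_zero
      (Nat.cast_ne_zero.2 (by omega)) hg
  rw [hJ, Matrix.rank_vecMulVec_of_ne_zero hp hrow]

theorem stmt19 (n m : ℕ) (hn : 3 ≤ n) (hm : 1 ≤ m) (hmn : m ≤ n - 1) :
    let gpoly : Fin (n - 1) → MvPolynomial (Fin (n - 1)) ℂ := fun ℓ =>
      (X ℓ) ^ 3 * ∑ k ∈ Finset.range (n - 1),
        MvPolynomial.C ((-1 : ℂ) ^ k * ((k : ℂ) + 1) / ((k : ℂ) + 3)) * (X ℓ) ^ k *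
          MvPolynomial.esymm (Fin (n - 1)) ℂ (n - 2 - k)
    let p : Fin (n - 1) → ℂ := fun i => if (i : ℕ) < m then 1 else 0
    let J : Matrix (Fin (n - 1)) (Fin (n - 1)) ℂ := fun i j =>
      MvPolynomial.eval p (MvPolynomial.pderiv j (gpoly i))
    (∀ i : Fin (n - 1), m ≤ (i : ℕ) → ∀ j, J i j = 0) ∧
      (∀ i i' : Fin (n - 1), (i : ℕ) < m → (i' : ℕ) < m → ∀ j, J i j = J i' j) ∧
      J.rank = 1 :=
  stmt19_general n m hm hmn
end
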